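/- Let Ω ⊆ ℝ^d be a domain with boundary Γ, let A be a bounded nonempty subset of Γ, let s ∈ (0,d) and suppose there is c > 0 such that |A_t| ≤ c·t^{d−s} for all t ∈ (0,1]. Let δ be a real number with 2 + s − d ≤ δ < 2. Then there exists c' > 0 such that for every r ∈ (0,1] and every integer n ≥ 2 one has ∫_Ω 1_{{x : r/n ≤ d_A(x) ≤ r}}·d_A(x)^{−(2−δ)} dx ≤ c'·(1 + (2−δ)·log n). -/

import Mathlib

/-!
Split `{r/n ≤ d_A ≤ r}` into the dyadic shells `r/2^(k+1) ≤ d_A ≤ r/2^k`, `k ≤ log₂ n`. With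
`ρ = r/2^k`, on the `k`-th shell `d_A^(-(2-δ)) ≤ (ρ/2)^(-(2-δ))` while `|Ω ∩ {d_A ≤ ρ}| ≤ c ρ^(d-s)`;
as `2 - δ ≤ d - s`, each shell contributes at most `c 2^(2-δ)`, and there are at most
`1 + 2 log n` shells. Passing from `A_ρ = {d_A < ρ}` to `{d_A ≤ ρ}` (also at `ρ = 1`) uses that the
level sets of `d_A` are porous, hence null by the Lebesgue density theorem.
-/

open MeasureTheory Metric Set
open scoped ENNReal NNReal

noncomputable section

abbrev Euc (d : ℕ) : Type := EuclideanSpace ℝ (Fin d)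


/-- The inner `t`-neighbourhood `A_t = {x ∈ closure Ω : d_A(x) < t}`. -/
def innNbhd (d : ℕ) (Ω A : Set (Euc d)) (t : ℝ) : Set (Euc d) :=
  {x ∈ closure Ω | infDist x A < t}

open Filter Topology

section LevelSets

variable {E : Type*} [NormedAddCommGroup E] [NormedSpace ℝ E]

/-- The centre is the point at distance `ε / 2` from `x` towards a nearest point of `closure A`. -/
theorem exists_ball_subset_closedBall_diff_infDist_eq [ProperSpace E] {A : Set E} {x : E}
    {t ε : ℝ} (hx : infDist x A = t) (hε : 0 < ε) (hεt : ε < t) :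
    ∃ z, ball z (ε / 4) ⊆ closedBall x ε \ {y | infDist y A = t} := by
  have ht : 0 < t := hε.trans hεt
  have hA : A.Nonempty := nonempty_iff_ne_empty.2 fun h => by
    rw [h, infDist_empty] at hx; linarith
  obtain ⟨a, haA, hxa⟩ := exists_mem_closure_infDist_eq_dist hA x
  set z := AffineMap.lineMap x a (ε / (2 * t))
  have hzx : dist z x = ε / 2 := by
    rw [dist_lineMap_left, ← hxa, hx, Real.norm_of_nonneg (by positivity)]
    field_simp
  have hza : dist z a = t - ε / 2 := by
    rw [dist_lineMap_right, ← hxa, hx, Real.norm_of_nonneg]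
    · field_simp
    · rw [sub_nonneg, div_le_one (by positivity)]; linarith
  refine ⟨z, fun y hy => ⟨?_, fun hyt => ?_⟩⟩
  · rw [mem_ball] at hy
    rw [mem_closedBall]
    linarith [dist_triangle y z x]
  · have hzA : infDist z A ≤ t - ε / 2 := by
      rw [← infDist_closure]
      exact (infDist_le_dist_of_mem haA).trans hza.le
    have htri := infDist_le_infDist_add_dist (x := y) (y := z) (s := A)
    rw [mem_ball] at hy
    have hyt : infDist y A = t := hyt
    linarith

variable [FiniteDimensional ℝ E] [MeasurableSpace E] [BorelSpace E] (μ : Measure E)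
  [μ.IsAddHaarMeasure]

theorem addHaar_ball_div_four (x z : E) {ε : ℝ} (hε : 0 < ε) :
    μ (ball z (ε / 4)) = ENNReal.ofReal (4⁻¹ ^ Module.finrank ℝ E) * μ (closedBall x ε) := by
  rw [Measure.addHaar_ball_of_pos μ z (by positivity), Measure.addHaar_closedBall μ x hε.le,
    ← mul_assoc, ← ENNReal.ofReal_mul (by positivity), ← mul_pow]
  ring_nf

/-- The density of `L` at each of its points stays below `1 - 4⁻¹ ^ dim E`, contradicting the
Lebesgue density theorem. -/
theorem measure_eq_zero_of_porous {L : Set E} (hL : MeasurableSet L)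
    (hpor : ∀ x ∈ L, ∀ᶠ ε in 𝓝[>] (0 : ℝ), ∃ z, ball z (ε / 4) ⊆ closedBall x ε \ L) :
    μ L = 0 := by
  by_contra hμL
  have : (ae (μ.restrict L)).NeBot := ae_neBot.2 (by simpa [Measure.restrict_eq_zero] using hμL)
  obtain ⟨x, hdensity, hxL⟩ :=
    ((Besicovitch.ae_tendsto_measure_inter_div μ L).and (ae_restrict_mem hL)).exists
  set q : ℝ≥0∞ := ENNReal.ofReal (4⁻¹ ^ Module.finrank ℝ E)
  have hq : 0 < q := ENNReal.ofReal_pos.2 (by positivity)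
  have hdensity_le : ∀ᶠ ε in 𝓝[>] (0 : ℝ), μ (L ∩ closedBall x ε) / μ (closedBall x ε) ≤ 1 - q := by
    filter_upwards [hpor x hxL, self_mem_nhdsWithin] with ε ⟨z, hz⟩ (hε : 0 < ε)
    refine ENNReal.div_le_of_le_mul ?_
    calc μ (L ∩ closedBall x ε) ≤ μ (closedBall x ε \ ball z (ε / 4)) :=
          measure_mono fun y ⟨hyL, hy⟩ => ⟨hy, fun hyz => (hz hyz).2 hyL⟩
      _ = μ (closedBall x ε) - μ (ball z (ε / 4)) :=
          measure_sdiff (hz.trans sdiff_subset) measurableSet_ball.nullMeasurableSet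
            measure_ball_lt_top.ne
      _ = (1 - q) * μ (closedBall x ε) := by
          rw [addHaar_ball_div_four μ x z hε,
            ENNReal.sub_mul fun _ _ => measure_closedBall_lt_top.ne, one_mul]
  have h1q : 1 - q < 1 := ENNReal.sub_lt_self ENNReal.one_ne_top one_ne_zero hq.ne'
  exact h1q.not_ge (le_of_tendsto hdensity hdensity_le)

theorem measure_setOf_infDist_eq (A : Set E) {t : ℝ} (ht : 0 < t) :
    μ {x | infDist x A = t} = 0 := by
  refine measure_eq_zero_of_porous μ
    (isClosed_eq (continuous_infDist_pt A) continuous_const).measurableSet fun x hx => ?_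
  filter_upwards [Ioo_mem_nhdsGT ht] with ε hε
  exact exists_ball_subset_closedBall_diff_infDist_eq hx hε.1 hε.2

end LevelSets

theorem volume_setOf_mem_infDist_le_le {d : ℕ} {Ω A : Set (Euc d)} {c s : ℝ}
    (hvol : ∀ t : ℝ, 0 < t → t ≤ 1 →
      volume (innNbhd d Ω A t) ≤ ENNReal.ofReal (c * t ^ ((d : ℝ) - s)))
    {ρ : ℝ} (hρ0 : 0 < ρ) (hρ1 : ρ ≤ 1) :
    volume {x ∈ Ω | infDist x A ≤ ρ} ≤ ENNReal.ofReal (c * ρ ^ ((d : ℝ) - s)) := by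
  have hsub : {x ∈ Ω | infDist x A ≤ ρ} ⊆ innNbhd d Ω A ρ ∪ {x | infDist x A = ρ} := by
    rintro x ⟨hxΩ, hxρ⟩
    rcases hxρ.lt_or_eq with hlt | heq
    · exact Or.inl ⟨subset_closure hxΩ, hlt⟩
    · exact Or.inr heq
  calc volume {x ∈ Ω | infDist x A ≤ ρ}
      ≤ volume (innNbhd d Ω A ρ) + volume {x : Euc d | infDist x A = ρ} :=
        (measure_mono hsub).trans (measure_union_le _ _)
    _ = volume (innNbhd d Ω A ρ) := by rw [measure_setOf_infDist_eq volume A hρ0, add_zero]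
    _ ≤ _ := hvol ρ hρ0 hρ1

theorem exists_dyadic_shell {r D : ℝ} (K : ℕ) (hK : r / 2 ^ (K + 1) ≤ D) (hD : D ≤ r) :
    ∃ k ≤ K, r / 2 ^ (k + 1) ≤ D ∧ D ≤ r / 2 ^ k := by
  induction K with
  | zero => exact ⟨0, le_rfl, by simpa using hK, by simpa using hD⟩
  | succ K ih =>
    by_cases hKD : r / 2 ^ (K + 1) ≤ D
    · obtain ⟨k, hkK, hk⟩ := ih hKD
      exact ⟨k, hkK.trans K.le_succ, hk⟩
    · exact ⟨K + 1, le_rfl, hK, (not_le.1 hKD).le⟩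

theorem ofReal_indicator_rpow_neg_le_sum {X : Type*} (g : X → ℝ) {a r α : ℝ} (hr : 0 < r)
    (hα : 0 ≤ α) {K : ℕ} (haK : r / 2 ^ (K + 1) ≤ a) (x : X) :
    ENNReal.ofReal ({y | a ≤ g y ∧ g y ≤ r}.indicator (fun y => g y ^ (-α)) x) ≤
      ∑ k ∈ Finset.range (K + 1),
        {y | g y ≤ r / 2 ^ k}.indicator (fun _ => ENNReal.ofReal ((r / 2 ^ (k + 1)) ^ (-α))) x := by
  by_cases hx : a ≤ g x ∧ g x ≤ r
  · obtain ⟨k, hkK, hlow, hupp⟩ := exists_dyadic_shell K (haK.trans hx.1) hx.2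
    rw [indicator_of_mem (s := {y | a ≤ g y ∧ g y ≤ r}) hx]
    calc ENNReal.ofReal (g x ^ (-α)) ≤ ENNReal.ofReal ((r / 2 ^ (k + 1)) ^ (-α)) :=
          ENNReal.ofReal_le_ofReal
            (Real.rpow_le_rpow_of_nonpos (by positivity) hlow (neg_nonpos.2 hα))
      _ = {y | g y ≤ r / 2 ^ k}.indicator
            (fun _ => ENNReal.ofReal ((r / 2 ^ (k + 1)) ^ (-α))) x :=
          (indicator_of_mem (s := {y | g y ≤ r / 2 ^ k}) hupp
            (fun _ => ENNReal.ofReal ((r / 2 ^ (k + 1)) ^ (-α)))).symm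
      _ ≤ _ := Finset.single_le_sum (f := fun j => {y | g y ≤ r / 2 ^ j}.indicator
            (fun _ => ENNReal.ofReal ((r / 2 ^ (j + 1)) ^ (-α))) x)
            (fun _ _ => zero_le) (Finset.mem_range.2 (Nat.lt_succ_of_le hkK))
  · simp [indicator_of_notMem (s := {y | a ≤ g y ∧ g y ≤ r}) hx]

theorem rpow_div_two_neg_mul_rpow_le {ρ α β : ℝ} (hρ0 : 0 < ρ) (hρ1 : ρ ≤ 1) (hαβ : α ≤ β) :
    (ρ / 2) ^ (-α) * ρ ^ β ≤ 2 ^ α := by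
  calc (ρ / 2) ^ (-α) * ρ ^ β = 2 ^ α * ρ ^ (β - α) := by
        rw [Real.div_rpow hρ0.le zero_le_two, Real.rpow_neg zero_le_two, div_inv_eq_mul,
          Real.rpow_sub hρ0, Real.rpow_neg hρ0.le]
        ring
    _ ≤ 2 ^ α * 1 := by gcongr; exact Real.rpow_le_one hρ0.le hρ1 (by linarith)
    _ = 2 ^ α := mul_one _

theorem setLIntegral_dyadic_shell_le {d : ℕ} {Ω A : Set (Euc d)} {c s α : ℝ} (hc : 0 ≤ c)
    (hvol : ∀ t : ℝ, 0 < t → t ≤ 1 →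
      volume (innNbhd d Ω A t) ≤ ENNReal.ofReal (c * t ^ ((d : ℝ) - s)))
    (hαds : α ≤ d - s) {r : ℝ} (hr0 : 0 < r) (hr1 : r ≤ 1) (k : ℕ) :
    ∫⁻ x in Ω, {y | infDist y A ≤ r / 2 ^ k}.indicator
        (fun _ => ENNReal.ofReal ((r / 2 ^ (k + 1)) ^ (-α))) x ≤ ENNReal.ofReal (c * 2 ^ α) := by
  set ρ := r / 2 ^ k
  have hρ0 : 0 < ρ := by positivity
  have hρ1 : ρ ≤ 1 := (div_le_self hr0.le (one_le_pow₀ one_le_two)).trans hr1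
  have hmeas : MeasurableSet {y | infDist y A ≤ ρ} :=
    (isClosed_le (continuous_infDist_pt A) continuous_const).measurableSet
  have hρ2 : r / 2 ^ (k + 1) = ρ / 2 := by rw [pow_succ, div_div]
  rw [lintegral_indicator hmeas, setLIntegral_const, Measure.restrict_apply hmeas, hρ2,
    inter_comm]
  calc ENNReal.ofReal ((ρ / 2) ^ (-α)) * volume {x ∈ Ω | infDist x A ≤ ρ}
      ≤ ENNReal.ofReal ((ρ / 2) ^ (-α)) * ENNReal.ofReal (c * ρ ^ ((d : ℝ) - s)) :=
        mul_le_mul_right (volume_setOf_mem_infDist_le_le hvol hρ0 hρ1) _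
    _ = ENNReal.ofReal (c * ((ρ / 2) ^ (-α) * ρ ^ ((d : ℝ) - s))) := by
        rw [← ENNReal.ofReal_mul (by positivity)]; ring_nf
    _ ≤ ENNReal.ofReal (c * 2 ^ α) :=
        ENNReal.ofReal_le_ofReal (mul_le_mul_of_nonneg_left
          (rpow_div_two_neg_mul_rpow_le hρ0 hρ1 hαds) hc)

theorem natLog_two_le_two_mul_log (n : ℕ) : (Nat.log 2 n : ℝ) ≤ 2 * Real.log n := by
  have hlog2 : (1 / 2 : ℝ) < Real.log 2 := by linarith [Real.log_two_gt_d9]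
  have hlogn : 0 ≤ Real.log n := Real.log_natCast_nonneg n
  calc (Nat.log 2 n : ℝ) ≤ Real.logb 2 n := by exact_mod_cast Real.natLog_le_logb n 2
    _ = Real.log n / Real.log 2 := rfl
    _ ≤ 2 * Real.log n := by
        rw [div_le_iff₀ (by linarith)]; nlinarith

theorem one_add_two_mul_le {α L : ℝ} (hα : 0 < α) (hL : 0 ≤ L) :
    1 + 2 * L ≤ 2 * (1 + α⁻¹) * (1 + α * L) := by
  have hexpand : (1 + α⁻¹) * (1 + α * L) = 1 + L + α⁻¹ + α * L := by
    field_simp; ring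
  have : 0 ≤ α⁻¹ + α * L := by positivity
  linarith

theorem stmt_14_general (d : ℕ) (Ω : Set (Euc d)) (A : Set (Euc d)) (s : ℝ) (c : ℝ) (hc : 0 < c)
    (hvol : ∀ t : ℝ, 0 < t → t ≤ 1 →
      volume (innNbhd d Ω A t) ≤ ENNReal.ofReal (c * t ^ ((d : ℝ) - s)))
    (δ : ℝ) (hδ1 : 2 + s - d ≤ δ) (hδ2 : δ < 2) :
    ∃ c' > (0 : ℝ), ∀ r : ℝ, 0 < r → r ≤ 1 → ∀ n : ℕ, 2 ≤ n →
      ∫⁻ x in Ω, ENNReal.ofReal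
          ({y : Euc d | r / n ≤ infDist y A ∧ infDist y A ≤ r}.indicator
            (fun y => infDist y A ^ (-(2 - δ))) x) ≤
        ENNReal.ofReal (c' * (1 + (2 - δ) * Real.log n)) := by
  set α := 2 - δ
  have hα0 : 0 < α := by linarith
  have hαds : α ≤ d - s := by linarith
  refine ⟨2 * (c * 2 ^ α) * (1 + α⁻¹), by positivity, fun r hr0 hr1 n hn => ?_⟩
  set K := Nat.log 2 n
  have hnK : r / 2 ^ (K + 1) ≤ r / n :=
    div_le_div_of_nonneg_left hr0.le (Nat.cast_pos.2 (by omega))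
      (by exact_mod_cast (Nat.lt_pow_succ_log_self one_lt_two n).le)
  have hK : (K + 1 : ℝ) ≤ 2 * (1 + α⁻¹) * (1 + α * Real.log n) := by
    linarith [natLog_two_le_two_mul_log n, one_add_two_mul_le hα0 (Real.log_natCast_nonneg n)]
  calc _ ≤ ∫⁻ x in Ω, ∑ k ∈ Finset.range (K + 1), {y | infDist y A ≤ r / 2 ^ k}.indicator
          (fun _ => ENNReal.ofReal ((r / 2 ^ (k + 1)) ^ (-α))) x :=
        lintegral_mono (ofReal_indicator_rpow_neg_le_sum _ hr0 hα0.le hnK)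
    _ = ∑ k ∈ Finset.range (K + 1), ∫⁻ x in Ω, {y | infDist y A ≤ r / 2 ^ k}.indicator
          (fun _ => ENNReal.ofReal ((r / 2 ^ (k + 1)) ^ (-α))) x :=
        lintegral_finsetSum _ fun k _ => measurable_const.indicator
          (isClosed_le (continuous_infDist_pt A) continuous_const).measurableSet
    _ ≤ ∑ k ∈ Finset.range (K + 1), ENNReal.ofReal (c * 2 ^ α) :=
        Finset.sum_le_sum fun k _ => setLIntegral_dyadic_shell_le hc.le hvol hαds hr0 hr1 k
    _ = ENNReal.ofReal ((K + 1) * (c * 2 ^ α)) := by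
        rw [Finset.sum_const, Finset.card_range, nsmul_eq_mul, ← ENNReal.ofReal_natCast,
          ← ENNReal.ofReal_mul (by positivity)]
        push_cast
        rfl
    _ ≤ _ := ENNReal.ofReal_le_ofReal (by nlinarith [show 0 < c * 2 ^ α by positivity])

/-- The key integral estimate in the proof of Proposition 3.1: if `|A_t| ≤ c·t^(d-s)`
for `t ∈ (0,1]` and `2 + s - d ≤ δ < 2`, then
`∫_Ω 1_{r/n ≤ d_A ≤ r} d_A^{-(2-δ)} ≤ c'·(1 + (2-δ)·log n)` for all `r ∈ (0,1]`, `n ≥ 2`. -/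
theorem stmt_14 (d : ℕ) (Ω : Set (Euc d)) (hΩopen : IsOpen Ω) (hΩconn : IsConnected Ω)
    (A : Set (Euc d)) (hAΓ : A ⊆ frontier Ω) (hAne : A.Nonempty)
    (hAbd : Bornology.IsBounded A)
    (s : ℝ) (hs0 : 0 < s) (hsd : s < d) (c : ℝ) (hc : 0 < c)
    (hvol : ∀ t : ℝ, 0 < t → t ≤ 1 →
      volume (innNbhd d Ω A t) ≤ ENNReal.ofReal (c * t ^ ((d : ℝ) - s)))
    (δ : ℝ) (hδ1 : 2 + s - d ≤ δ) (hδ2 : δ < 2) :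
    ∃ c' > (0 : ℝ), ∀ r : ℝ, 0 < r → r ≤ 1 → ∀ n : ℕ, 2 ≤ n →
      ∫⁻ x in Ω, ENNReal.ofReal
          ({y : Euc d | r / n ≤ infDist y A ∧ infDist y A ≤ r}.indicator
            (fun y => infDist y A ^ (-(2 - δ))) x) ≤
        ENNReal.ofReal (c' * (1 + (2 - δ) * Real.log n)) :=
  stmt_14_general d Ω A s c hc hvol δ hδ1 hδ2
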